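/- arXiv:2107.12116 — 4 statements merged into one kernel-verified Lean document; each statement's English description precedes it below -/
import Mathlib

section
/- Let $S = K[X_1,\ldots,X_n]$ over a perfect field $K$ of characteristic $p>0$, and let $\mathrm{Tr} \in \mathrm{Hom}_S(F_*S, S)$ be the projection onto the basis element $X_1^{p-1}\cdots X_n^{p-1}$ (the dual basis element corresponding to that monomial). Then the map $\Phi: F_*S \to \mathrm{Hom}_S(F_*S,S)$ sending $f$ to the map $g \mapsto \mathrm{Tr}(fg)$ is an isomorphism of $F_*S$-modules. -/
/-!
Every monomial factors as `X^u = (X^⌊u/p⌋)^p · X^(u mod p)`, so the monomials `X^t` with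
`t ∈ {0, …, p-1}ⁿ` span `F_*S` over `S`, and `Tr (X^t · X^(p-1-s)) = δ_{ts}`. Reading off
coefficients with `Tr` gives `h = ∑_t Tr (h · X^(p-1-t))^p · X^t`, so `f ↦ Tr (f · -)` is
injective; and an `S`-linear `ψ` agrees on the spanning set, hence everywhere, with
`Tr (f · -)` for `f = ∑_t ψ (X^t)^p · X^(p-1-t)`.
-/

open MvPolynomial
open scoped Classical

/-- The trace map `Tr : F_*S → S`, the projection onto the basis element
`X_1^{p-1} ⋯ X_n^{p-1}` of the monomial basis of `F_*S` over `S`: a monomial `a·X^u`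
is sent to `a^{1/p}·X^{(u+1)/p - 1}` if all `u_j ≡ -1 (mod p)`, and to `0` otherwise. -/
noncomputable def Tr (n p : ℕ) [Fact p.Prime] (K : Type) [Field K] [CharP K p]
    [PerfectRing K p] (g : MvPolynomial (Fin n) K) : MvPolynomial (Fin n) K :=
  ∑ u ∈ g.support,
    if (∀ j, u j % p = p - 1) then
      monomial
        (u.mapRange (fun a => (a + 1) / p - 1)
          (by simp [Nat.div_eq_of_lt (Fact.out : p.Prime).one_lt]))
        ((frobeniusEquiv K p).symm (coeff u g))
    else 0

lemma Fin.val_add_rev_mod_eq_pred_iff {p : ℕ} (a b : Fin p) :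
    ((a : ℕ) + b.rev) % p = p - 1 ↔ a = b := by
  have ha := a.isLt
  have hb := b.isLt
  rw [Fin.val_rev, ← Fin.val_inj]
  rcases lt_or_ge ((a : ℕ) + (p - (b + 1))) p with h | h
  · rw [Nat.mod_eq_of_lt h]; omega
  · rw [Nat.mod_eq_sub_mod h, Nat.mod_eq_of_lt (by omega)]; omega

noncomputable def trExp {n : ℕ} (p : ℕ) [Fact p.Prime] (u : Fin n →₀ ℕ) : Fin n →₀ ℕ :=
  u.mapRange (fun a => (a + 1) / p - 1)
    (by simp [Nat.div_eq_of_lt (Fact.out : p.Prime).one_lt])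

lemma trExp_nsmul_add {n p : ℕ} [Fact p.Prime] (c u : Fin n →₀ ℕ)
    (hu : ∀ j, u j % p = p - 1) : trExp p (p • c + u) = c + trExp p u := by
  have hp := (Fact.out : p.Prime).pos
  ext j
  have hpu : 1 ≤ (u j + 1) / p :=
    (Nat.one_le_div_iff hp).2 (by have := Nat.mod_le (u j) p; have := hu j; omega)
  simp only [trExp, Finsupp.mapRange_apply, Finsupp.add_apply, Finsupp.smul_apply, smul_eq_mul,
    add_assoc, Nat.mul_add_div hp]
  omega

noncomputable def boxExp {n p : ℕ} (t : Fin n → Fin p) : Fin n →₀ ℕ :=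
  Finsupp.equivFunOnFinite.symm fun j => (t j : ℕ)

lemma trExp_boxExp_add_boxExp_rev {n p : ℕ} [Fact p.Prime] (t : Fin n → Fin p) :
    trExp p (boxExp t + boxExp fun j => (t j).rev) = 0 := by
  have hp := (Fact.out : p.Prime).pos
  ext j
  have := (t j).isLt
  simp only [trExp, boxExp, Finsupp.mapRange_apply, Finsupp.add_apply,
    Finsupp.coe_equivFunOnFinite_symm, Fin.val_rev, Finsupp.coe_zero, Pi.zero_apply]
  rw [show (t j : ℕ) + (p - (t j + 1)) + 1 = p by omega, Nat.div_self hp, Nat.sub_self]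

section
variable {n p : ℕ} [Fact p.Prime] {K : Type} [Field K] [CharP K p] [PerfectRing K p]

lemma monomial_eq_pow_mul_boxExp (u : Fin n →₀ ℕ) (a : K) :
    monomial u a =
      monomial (u.mapRange (· / p) (Nat.zero_div p)) ((frobeniusEquiv K p).symm a) ^ p *
        monomial (boxExp fun j => Fin.ofNat p (u j)) 1 := by
  rw [monomial_pow, monomial_mul, frobeniusEquiv_symm_pow_p, mul_one]
  congr 2
  ext j
  simp only [boxExp, Finsupp.add_apply, Finsupp.smul_apply, Finsupp.mapRange_apply, smul_eq_mul,
    Finsupp.coe_equivFunOnFinite_symm, Fin.val_ofNat, Nat.div_add_mod]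

lemma exists_eq_sum_pow_mul_boxExp (h : MvPolynomial (Fin n) K) :
    ∃ c : (Fin n → Fin p) → MvPolynomial (Fin n) K,
      h = ∑ t, c t ^ p * monomial (boxExp t) 1 := by
  induction h using MvPolynomial.induction_on' with
  | monomial u a =>
    refine ⟨fun t => if t = fun j => Fin.ofNat p (u j) then
      monomial (u.mapRange (· / p) (Nat.zero_div p)) ((frobeniusEquiv K p).symm a) else 0, ?_⟩
    simp only [ite_pow, zero_pow (Fact.out : p.Prime).ne_zero, ite_mul, zero_mul,
      Finset.sum_ite_eq', Finset.mem_univ, if_true]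
    exact monomial_eq_pow_mul_boxExp u a
  | add f g hf hg =>
    obtain ⟨c, rfl⟩ := hf
    obtain ⟨d, rfl⟩ := hg
    exact ⟨c + d, by simp only [Pi.add_apply, add_pow_char, add_mul, Finset.sum_add_distrib]⟩

variable (n p K) in
noncomputable def trTerm (u : Fin n →₀ ℕ) : K →+ MvPolynomial (Fin n) K :=
  if ∀ j, u j % p = p - 1 then
    (monomial (trExp p u)).toAddMonoidHom.comp (frobeniusEquiv K p).symm.toAddMonoidHom
  else 0

variable (n p K) in
noncomputable def trAddHom : MvPolynomial (Fin n) K →+ MvPolynomial (Fin n) K :=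
  (Finsupp.liftAddHom (trTerm n p K)).comp AddMonoidAlgebra.coeffAddEquiv.toAddMonoidHom

lemma trAddHom_apply (g : MvPolynomial (Fin n) K) : trAddHom n p K g = Tr n p K g := by
  simp only [trAddHom, Tr, AddMonoidHom.comp_apply, Finsupp.liftAddHom_apply, Finsupp.sum,
    trTerm]
  refine Finset.sum_congr rfl fun u _ => ?_
  split_ifs <;> rfl

lemma Tr_add (f g : MvPolynomial (Fin n) K) : Tr n p K (f + g) = Tr n p K f + Tr n p K g := by
  simp only [← trAddHom_apply, map_add]

lemma Tr_sum {ι : Type*} (s : Finset ι) (f : ι → MvPolynomial (Fin n) K) :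
    Tr n p K (∑ i ∈ s, f i) = ∑ i ∈ s, Tr n p K (f i) := by
  simp only [← trAddHom_apply, map_sum]

lemma Tr_monomial (u : Fin n →₀ ℕ) (a : K) :
    Tr n p K (monomial u a) =
      if ∀ j, u j % p = p - 1 then monomial (trExp p u) ((frobeniusEquiv K p).symm a) else 0 := by
  rw [← trAddHom_apply]
  simp only [trAddHom, trTerm, AddEquiv.toAddMonoidHom_eq_coe, AddMonoidHom.coe_comp,
    AddMonoidHom.coe_coe, Function.comp_apply, AddMonoidAlgebra.coeffAddEquiv_apply,
    Finsupp.liftAddHom_apply, map_zero, sum_monomial_eq]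
  split_ifs <;> rfl

lemma Tr_monomial_pow_mul (c u : Fin n →₀ ℕ) (b a : K) :
    Tr n p K (monomial c b ^ p * monomial u a) = monomial c b * Tr n p K (monomial u a) := by
  have hmod (j : Fin n) : (p • c + u) j % p = u j % p := by simp
  rw [monomial_pow, monomial_mul, Tr_monomial, Tr_monomial]
  simp only [hmod]
  split_ifs with hu
  · rw [monomial_mul, map_mul, frobeniusEquiv_symm_pow, trExp_nsmul_add c u hu]
  · rw [mul_zero]

theorem Tr_pow_mul (r g : MvPolynomial (Fin n) K) : Tr n p K (r ^ p * g) = r * Tr n p K g := by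
  induction g using MvPolynomial.induction_on' with
  | add g h hg hh => rw [mul_add, Tr_add, Tr_add, mul_add, hg, hh]
  | monomial u a =>
    induction r using MvPolynomial.induction_on' with
    | add r s hr hs => rw [add_pow_char, add_mul, Tr_add, hr, hs, add_mul]
    | monomial c b => exact Tr_monomial_pow_mul c u b a

theorem Tr_monomial_boxExp_mul_rev (t s : Fin n → Fin p) :
    Tr n p K (monomial (boxExp t) 1 * monomial (boxExp fun j => (s j).rev) 1) =
      if t = s then 1 else 0 := by
  have hcond : (∀ j, (boxExp t + boxExp fun j => (s j).rev) j % p = p - 1) ↔ t = s := by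
    simp only [boxExp, Finsupp.add_apply, Finsupp.coe_equivFunOnFinite_symm,
      Fin.val_add_rev_mod_eq_pred_iff, funext_iff]
  rw [monomial_mul, one_mul, Tr_monomial, if_congr hcond rfl rfl]
  split_ifs with hts
  · rw [hts, trExp_boxExp_add_boxExp_rev, map_one, monomial_zero', C_1]
  · rfl

lemma Tr_monomial_boxExp_rev_mul (t s : Fin n → Fin p) :
    Tr n p K (monomial (boxExp fun j => (t j).rev) 1 * monomial (boxExp s) 1) =
      if t = s then 1 else 0 := by
  rw [mul_comm, Tr_monomial_boxExp_mul_rev]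
  exact if_congr eq_comm rfl rfl

lemma Tr_sum_pow_mul_mul {ι : Type*} [Fintype ι] [DecidableEq ι]
    {a b : ι → MvPolynomial (Fin n) K}
    (hab : ∀ i j, Tr n p K (a i * b j) = if i = j then 1 else 0)
    (c : ι → MvPolynomial (Fin n) K) (j : ι) :
    Tr n p K ((∑ i, c i ^ p * a i) * b j) = c j := by
  simp only [Finset.sum_mul, mul_assoc, Tr_sum, Tr_pow_mul, hab, mul_ite, mul_one, mul_zero,
    Finset.sum_ite_eq', Finset.mem_univ, if_true]

lemma eq_sum_Tr_mul_pow_mul_boxExp (h : MvPolynomial (Fin n) K) :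
    h = ∑ t : Fin n → Fin p,
      Tr n p K (h * monomial (boxExp fun j => (t j).rev) 1) ^ p * monomial (boxExp t) 1 := by
  obtain ⟨c, hc⟩ := exists_eq_sum_pow_mul_boxExp (p := p) h
  have hcoeff (t : Fin n → Fin p) :
      Tr n p K (h * monomial (boxExp fun j => (t j).rev) 1) = c t := by
    rw [hc]; exact Tr_sum_pow_mul_mul Tr_monomial_boxExp_mul_rev c t
  simp only [hcoeff]
  exact hc

lemma eq_of_forall_Tr_mul_eq {f₁ f₂ : MvPolynomial (Fin n) K}
    (h : ∀ g, Tr n p K (f₁ * g) = Tr n p K (f₂ * g)) : f₁ = f₂ := by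
  rw [eq_sum_Tr_mul_pow_mul_boxExp (p := p) f₁, eq_sum_Tr_mul_pow_mul_boxExp (p := p) f₂]
  simp only [h]

lemma addMonoidHom_ext_of_map_pow_mul
    {ψ₁ ψ₂ : MvPolynomial (Fin n) K →+ MvPolynomial (Fin n) K}
    (h₁ : ∀ r g, ψ₁ (r ^ p * g) = r * ψ₁ g) (h₂ : ∀ r g, ψ₂ (r ^ p * g) = r * ψ₂ g)
    (hbox : ∀ t : Fin n → Fin p,
      ψ₁ (monomial (boxExp t) 1) = ψ₂ (monomial (boxExp t) 1)) :
    ψ₁ = ψ₂ := by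
  refine AddMonoidHom.ext fun g => ?_
  obtain ⟨c, rfl⟩ := exists_eq_sum_pow_mul_boxExp (p := p) g
  simp only [map_sum, h₁, h₂, hbox]

theorem eq_Tr_mul_of_map_pow_mul {ψ : MvPolynomial (Fin n) K →+ MvPolynomial (Fin n) K}
    (hψ : ∀ r g, ψ (r ^ p * g) = r * ψ g) (g : MvPolynomial (Fin n) K) :
    ψ g = Tr n p K ((∑ t : Fin n → Fin p,
      ψ (monomial (boxExp t) 1) ^ p * monomial (boxExp fun j => (t j).rev) 1) * g) := by
  set f := ∑ t : Fin n → Fin p,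
    ψ (monomial (boxExp t) 1) ^ p * monomial (boxExp fun j => (t j).rev) 1
  suffices ψ = (trAddHom n p K).comp (AddMonoidHom.mulLeft f) by
    rw [this]; exact trAddHom_apply _
  refine addMonoidHom_ext_of_map_pow_mul hψ (fun r g => ?_) fun s => ?_ <;>
    simp only [AddMonoidHom.comp_apply, AddMonoidHom.coe_mulLeft, trAddHom_apply]
  · rw [mul_left_comm, Tr_pow_mul]
  · exact (Tr_sum_pow_mul_mul Tr_monomial_boxExp_rev_mul
      (fun t => ψ (monomial (boxExp t) 1)) s).symm

end

/-- `Hom_S(F_*S, S)` is modelled by the additive maps `ψ` with `ψ (r^p g) = r ψ g`; the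
`F_*S`-linearity of `Φ` holds by definition of the action `(a ⋆ φ) g = φ (a g)`. -/
theorem stmt1 (n p : ℕ) [Fact p.Prime] (K : Type) [Field K] [CharP K p] [PerfectRing K p] :
    (∀ f r g : MvPolynomial (Fin n) K,
        Tr n p K (f * (r ^ p * g)) = r * Tr n p K (f * g)) ∧
    (∀ ψ : MvPolynomial (Fin n) K →+ MvPolynomial (Fin n) K,
      (∀ r g : MvPolynomial (Fin n) K, ψ (r ^ p * g) = r * ψ g) →
        ∃! f : MvPolynomial (Fin n) K, ∀ g, ψ g = Tr n p K (f * g)) := by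
  refine ⟨fun f r g => by rw [mul_left_comm, Tr_pow_mul], fun ψ hψ => ?_⟩
  refine ⟨_, eq_Tr_mul_of_map_pow_mul hψ, fun f hf => ?_⟩
  exact eq_of_forall_Tr_mul_eq fun g => (hf g).symm.trans (eq_Tr_mul_of_map_pow_mul hψ g)
end

section
/- Let $S = K[X_1,\ldots,X_n]$ over a perfect field $K$ of characteristic $p > 0$ and let $\theta = X_1^{p-1}\cdots X_n^{p-1} \star \mathrm{Tr}$, i.e., $\theta(g) = \mathrm{Tr}(X_1^{p-1}\cdots X_n^{p-1} g)$. Then $\theta$ is an $F$-splitting of $S$, and an ideal $I \subset S$ satisfies $\theta(I) \subseteq I$ if and only if $I$ is a squarefree monomial ideal. -/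
/-!
The coefficient of `θ g` at `w` is the `p`-th root of the coefficient of `g` at `p • w`. This
gives `θ (r ^ p) = r`, and a squarefree monomial ideal is `θ`-stable because for squarefree `u`,
`u ≤ p • w` forces `u ≤ w`.

Conversely, let `I` be `θ`-stable, `g ∈ I` and `X^a` a monomial of `g`; let `s` be the squarefree
exponent with the support of `a` (`radicalExponent a`). Choose `e` with every exponent of `g`
below `p ^ e` and put `B = p ^ e • s - a`. The coefficient of `θ^e (X^B g) ∈ I` at `w` is a root
of that of `g` at `p ^ e • w - B`. Exponents below `p ^ e` are determined by their residues
mod `p ^ e`, so the only monomial of `g` this hits is `X^a`, at `w = s`. Hence `X^s ∈ I`, and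
`I` is generated by these squarefree monomials.
-/

open MvPolynomial
open scoped Classical

/-- An ideal of `K[X_1,…,X_n]` is a squarefree monomial ideal if it is generated by
monomials all of whose exponents are at most `1`. -/
def IsSqFreeMonomialIdeal (n : ℕ) (K : Type) [Field K]
    (I : Ideal (MvPolynomial (Fin n) K)) : Prop :=
  ∃ G : Set (Fin n →₀ ℕ), (∀ u ∈ G, ∀ j, u j ≤ 1) ∧
    I = Ideal.span ((fun u => monomial u (1 : K)) '' G)

lemma eq_mul_add_pred_iff {p u w : ℕ} (hp : 0 < p) :
    u = p * w + (p - 1) ↔ u % p = p - 1 ∧ (u + 1) / p - 1 = w := by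
  constructor
  · rintro rfl
    have hsucc : p * w + (p - 1) + 1 = p * (w + 1) := by rw [mul_add]; omega
    rw [Nat.mul_add_mod, Nat.mod_eq_of_lt (by omega), hsucc, Nat.mul_div_cancel_left _ hp]
    simp
  · rintro ⟨hmod, rfl⟩
    have hdiv := Nat.div_add_mod u p
    have hsucc : u + 1 = p * (u / p + 1) := by rw [mul_add]; omega
    rw [hsucc, Nat.mul_div_cancel_left _ hp, Nat.add_sub_cancel]
    omega

lemma eq_and_eq_of_add_mul_eq_mul_add {q v a s w : ℕ} (hv : v < q) (ha : a < q)
    (h : v + q * s = q * w + a) : v = a ∧ s = w := by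
  have hmod : v = a := by
    simpa [Nat.add_mul_mod_self_left, Nat.mul_add_mod, Nat.mod_eq_of_lt hv,
      Nat.mod_eq_of_lt ha] using congrArg (· % q) h
  subst hmod
  exact ⟨rfl, Nat.eq_of_mul_eq_mul_left (show 0 < q by omega) (by omega : q * s = q * w)⟩

section Exponents

variable {σ : Type*}

noncomputable def radicalExponent (a : σ →₀ ℕ) : σ →₀ ℕ :=
  a.mapRange (fun t => min t 1) (by simp)

lemma radicalExponent_apply (a : σ →₀ ℕ) (j : σ) : radicalExponent a j = min (a j) 1 :=
  Finsupp.mapRange_apply ..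

lemma radicalExponent_le (a : σ →₀ ℕ) : radicalExponent a ≤ a := fun j => by
  simp [radicalExponent_apply]

lemma le_smul_radicalExponent {q : ℕ} {a : σ →₀ ℕ} (ha : ∀ j, a j < q) :
    a ≤ q • radicalExponent a := fun j => by
  rcases Nat.eq_zero_or_pos (a j) with h | h
  · simp [h]
  · simpa [radicalExponent_apply, Nat.min_eq_right h] using (ha j).le

lemma eq_and_eq_of_add_smul_eq_smul_add {q : ℕ} {v a s w : σ →₀ ℕ} (hv : ∀ j, v j < q)
    (ha : ∀ j, a j < q) (h : v + q • s = q • w + a) : v = a ∧ s = w := by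
  have hj j := eq_and_eq_of_add_mul_eq_mul_add (hv j) (ha j) (by simpa using congr($h j))
  exact ⟨Finsupp.ext fun j => (hj j).1, Finsupp.ext fun j => (hj j).2⟩

lemma le_of_le_smul {p : ℕ} {u w : σ →₀ ℕ} (hu : ∀ j, u j ≤ 1) (h : u ≤ p • w) : u ≤ w :=
  fun j => by
  have hj := h j
  rcases Nat.eq_zero_or_pos (w j) with h0 | h0
  · simp_all
  · exact (hu j).trans h0

end Exponents

section Polynomial

variable {σ : Type*}

lemma coeff_smul_pow_expChar {R : Type*} [CommSemiring R] {p : ℕ} [ExpChar R p]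
    (r : MvPolynomial σ R) (w : σ →₀ ℕ) : coeff (p • w) (r ^ p) = coeff w r ^ p := by
  rw [← map_frobenius_expand, coeff_map, coeff_expand_smul p (expChar_ne_zero R p),
    frobenius_def]

lemma monomial_one_mem_of_coeff {K : Type*} [Field K] {I : Ideal (MvPolynomial σ K)}
    {f : MvPolynomial σ K} {u : σ →₀ ℕ} (hf : f ∈ I) (hu : coeff u f ≠ 0)
    (hzero : ∀ w ≠ u, coeff w f = 0) :
    monomial u (1 : K) ∈ I := by
  set c := coeff u f
  have hmono : f = monomial u c := by
    ext w
    rw [coeff_monomial]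
    split_ifs with h
    · rw [← h]
    · exact hzero w (Ne.symm h)
  have hunit : monomial u (1 : K) = C c⁻¹ * f := by
    rw [hmono, C_mul_monomial, inv_mul_cancel₀ hu]
  exact hunit ▸ I.mul_mem_left _ hf

end Polynomial

section Theta

variable {n p : ℕ} [Fact p.Prime] {K : Type} [Field K] [CharP K p] [PerfectRing K p]

noncomputable def theta (n p : ℕ) [Fact p.Prime] (K : Type) [Field K] [CharP K p]
    [PerfectRing K p] (g : MvPolynomial (Fin n) K) : MvPolynomial (Fin n) K :=
  Tr n p K (monomial (Finsupp.equivFunOnFinite.symm fun _ => p - 1) 1 * g)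

lemma coeff_Tr (g : MvPolynomial (Fin n) K) (w : Fin n →₀ ℕ) :
    coeff w (Tr n p K g) = (frobeniusEquiv K p).symm
      (coeff (p • w + Finsupp.equivFunOnFinite.symm fun _ => p - 1) g) := by
  have hp : 0 < p := (Fact.out : p.Prime).pos
  set u₀ : Fin n →₀ ℕ := p • w + Finsupp.equivFunOnFinite.symm fun _ => p - 1
  have hu₀ : ∀ u : Fin n →₀ ℕ, u = u₀ ↔
      (∀ j, u j % p = p - 1) ∧ u.mapRange (fun a => (a + 1) / p - 1)
        (by simp [Nat.div_eq_of_lt (Fact.out : p.Prime).one_lt]) = w := by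
    intro u
    simp only [Finsupp.ext_iff, ← forall_and, Finsupp.mapRange_apply, u₀, Finsupp.add_apply,
      Finsupp.smul_apply, smul_eq_mul, Finsupp.coe_equivFunOnFinite_symm]
    exact forall_congr' fun j => eq_mul_add_pred_iff hp
  rw [Tr, coeff_sum, Finset.sum_eq_single u₀]
  · rw [if_pos ((hu₀ u₀).mp rfl).1, coeff_monomial, if_pos ((hu₀ u₀).mp rfl).2]
  · intro u _ hu
    split_ifs with hmod
    · rw [coeff_monomial, if_neg fun hw => hu ((hu₀ u).mpr ⟨hmod, hw⟩)]
    · exact coeff_zero w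
  · intro hu
    rw [notMem_support_iff.mp hu, map_zero, monomial_zero, ite_self, coeff_zero]

lemma coeff_theta_pow (g : MvPolynomial (Fin n) K) (w : Fin n →₀ ℕ) :
    coeff w (theta n p K g) ^ p = coeff (p • w) g := by
  rw [theta, coeff_Tr, frobeniusEquiv_symm_pow_p, add_comm, coeff_monomial_mul, one_mul]

lemma eq_theta_of_coeff_pow {f g : MvPolynomial (Fin n) K}
    (h : ∀ w, coeff w f ^ p = coeff (p • w) g) : f = theta n p K g := by
  ext w
  apply (frobeniusEquiv K p).injective
  simp only [frobeniusEquiv_apply, frobenius_def, h, coeff_theta_pow]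

lemma theta_pow (r : MvPolynomial (Fin n) K) : theta n p K (r ^ p) = r :=
  (eq_theta_of_coeff_pow fun w => (coeff_smul_pow_expChar r w).symm).symm

lemma coeff_iterate_theta_pow (g : MvPolynomial (Fin n) K) (e : ℕ) (w : Fin n →₀ ℕ) :
    coeff w ((theta n p K)^[e] g) ^ p ^ e = coeff (p ^ e • w) g := by
  induction e generalizing w with
  | zero => simp
  | succ e ih =>
    rw [Function.iterate_succ_apply', pow_succ, pow_mul', coeff_theta_pow, ih, mul_smul]

lemma mem_support_of_mem_support_theta {g : MvPolynomial (Fin n) K} {w : Fin n →₀ ℕ}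
    (hw : w ∈ (theta n p K g).support) : p • w ∈ g.support := by
  rw [mem_support_iff, ← coeff_theta_pow]
  exact pow_ne_zero p (mem_support_iff.mp hw)

lemma monomial_radicalExponent_mem {I : Ideal (MvPolynomial (Fin n) K)}
    (hI : Set.MapsTo (theta n p K) I I) {g : MvPolynomial (Fin n) K} (hg : g ∈ I)
    {a : Fin n →₀ ℕ} (ha : a ∈ g.support) : monomial (radicalExponent a) (1 : K) ∈ I := by
  set e := g.totalDegree
  have hlt : ∀ v ∈ g.support, ∀ j, v j < p ^ e := fun v hv j =>
    calc v j ≤ e := (Finsupp.le_degree j v).trans (le_totalDegree hv)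
      _ < p ^ e := Nat.lt_pow_self (Fact.out : p.Prime).one_lt
  set B := p ^ e • radicalExponent a - a
  have hB : B + a = p ^ e • radicalExponent a :=
    tsub_add_cancel_of_le (le_smul_radicalExponent (hlt a ha))
  have hcoeff := coeff_iterate_theta_pow (monomial B 1 * g) e
  refine monomial_one_mem_of_coeff (hI.iterate e (I.mul_mem_left (monomial B 1) hg))
    (fun h0 => ?_) ?_
  · have := hcoeff (radicalExponent a)
    rw [h0, zero_pow (pow_ne_zero e (Fact.out : p.Prime).ne_zero), ← hB,
      coeff_monomial_mul, one_mul] at this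
    exact mem_support_iff.mp ha this.symm
  · intro w hw
    by_contra h0
    have hne := pow_ne_zero (p ^ e) h0
    rw [hcoeff, coeff_monomial_mul'] at hne
    split_ifs at hne with hle
    · have hv : p ^ e • w - B ∈ g.support := mem_support_iff.mpr (by simpa using hne)
      refine hw (eq_and_eq_of_add_smul_eq_smul_add (hlt _ hv) (hlt a ha) ?_).2.symm
      rw [← hB, ← add_assoc, tsub_add_cancel_of_le hle]
    · exact hne rfl

lemma isSqFreeMonomialIdeal_of_mapsTo_theta {I : Ideal (MvPolynomial (Fin n) K)}
    (hI : Set.MapsTo (theta n p K) I I) : IsSqFreeMonomialIdeal n K I := by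
  refine ⟨{u | (∀ j, u j ≤ 1) ∧ monomial u (1 : K) ∈ I}, fun u hu => hu.1, le_antisymm ?_ ?_⟩
  · intro g hg
    rw [mem_ideal_span_monomial_image]
    intro a ha
    exact ⟨radicalExponent a, ⟨fun j => by simp [radicalExponent_apply],
      monomial_radicalExponent_mem hI hg ha⟩, radicalExponent_le a⟩
  · rw [Ideal.span_le]
    rintro _ ⟨u, hu, rfl⟩
    exact hu.2

lemma mapsTo_theta_of_isSqFreeMonomialIdeal {I : Ideal (MvPolynomial (Fin n) K)}
    (hI : IsSqFreeMonomialIdeal n K I) : Set.MapsTo (theta n p K) I I := by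
  obtain ⟨G, hG, rfl⟩ := hI
  intro g hg
  simp only [SetLike.mem_coe, mem_ideal_span_monomial_image] at hg ⊢
  intro w hw
  obtain ⟨u, huG, hu⟩ := hg _ (mem_support_of_mem_support_theta hw)
  exact ⟨u, huG, le_of_le_smul (hG u huG) hu⟩

end Theta

/-- `θ = X_1^{p-1}⋯X_n^{p-1} ⋆ Tr`, i.e. `θ g = Tr (X_1^{p-1}⋯X_n^{p-1} g)`,
is an `F`-splitting of `S = K[X_1,…,X_n]` (`θ ∘ F = id`), and an ideal `I ⊆ S` is
compatibly split with respect to `θ` (`θ(I) ⊆ I`) if and only if `I` is a squarefree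
monomial ideal. -/
theorem stmt3 (n p : ℕ) [Fact p.Prime] (K : Type) [Field K] [CharP K p] [PerfectRing K p] :
    (∀ r : MvPolynomial (Fin n) K,
      Tr n p K (monomial (Finsupp.equivFunOnFinite.symm fun _ => p - 1) (1 : K) * r ^ p) = r) ∧
    (∀ I : Ideal (MvPolynomial (Fin n) K),
      (∀ g ∈ I,
        Tr n p K (monomial (Finsupp.equivFunOnFinite.symm fun _ => p - 1) (1 : K) * g) ∈ I)
        ↔ IsSqFreeMonomialIdeal n K I) :=
  ⟨theta_pow, fun _ => ⟨isSqFreeMonomialIdeal_of_mapsTo_theta,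
    mapsTo_theta_of_isSqFreeMonomialIdeal⟩⟩
end

section
/- Let $\mathcal{P}$ be a $G$-deforming property of rings, and let $R$ be an $\mathbb{N}$-graded Noetherian ring with $R_0 = K$ a field and $t \in R_1$ a nonzerodivisor on $R$. If $R/tR$ has property $\mathcal{P}$, then $R/(t-\lambda)R$ has property $\mathcal{P}$ for every $\lambda \in K$. -/
/-!
For `λ ≠ 0` the localization `R_t` is isomorphic to `(R/(t - λ))[T, T⁻¹]`: a homogeneous `a` of
degree `n` goes to `ā Tⁿ`, and `t` goes to the unit `λ T`, so this extends to `R_t`; the inverse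
sends `T` to `t/λ` and `ā` to `a (λ/t)ⁿ`, which is well defined because it kills `t - λ`.
Condition (1) gives `𝒫` for `R_t`, hence for the Laurent ring, and condition (2) descends it to
`R/(t - λ)`. The case `λ = 0` is the hypothesis.
-/

open LaurentPolynomial

section GradedTwist

variable {ι σ R S : Type*} [CommRing R] [CommRing S] [SetLike σ R] [AddSubmonoidClass σ R]

theorem GradedRing.ringHom_ext [DecidableEq ι] (𝒜 : ι → σ) [DirectSum.Decomposition 𝒜]
    {f g : R →+* S} (h : ∀ i a, a ∈ 𝒜 i → f a = g a) : f = g := by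
  classical
  ext a
  rw [← DirectSum.sum_support_decompose 𝒜 a, map_sum, map_sum]
  exact Finset.sum_congr rfl fun i _ => h i _ (SetLike.coe_mem _)

variable (𝒜 : ℕ → σ) [GradedRing 𝒜]

noncomputable def gradedTwist (g : R →+* S) (u : S) : R →+* S :=
  (DirectSum.toSemiring
      (fun n => (AddMonoidHom.mulRight (u ^ n)).comp
        (g.toAddMonoidHom.comp (AddSubmonoidClass.subtype (𝒜 n))))
      (by simp [SetLike.coe_gOne]) (fun {i j} ai aj => by
        simp only [AddMonoidHom.coe_comp, Function.comp_apply, AddMonoidHom.coe_mulRight,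
          RingHom.toAddMonoidHom_eq_coe, AddMonoidHom.coe_coe, AddSubmonoidClass.coe_subtype,
          SetLike.coe_gMul, map_mul, pow_add]
        ring)).comp
    (DirectSum.decomposeRingEquiv 𝒜).toRingHom

theorem gradedTwist_of_mem (g : R →+* S) (u : S) {a : R} {n : ℕ} (ha : a ∈ 𝒜 n) :
    gradedTwist 𝒜 g u a = g a * u ^ n := by
  rw [gradedTwist, RingHom.comp_apply]
  erw [DirectSum.decompose_of_mem 𝒜 ha, DirectSum.toSemiring_of]
  rfl

end GradedTwist

theorem LaurentPolynomial.ringHom_ext' {R S : Type*} [CommSemiring R] [Semiring S]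
    {f g : R[T;T⁻¹] →+* S} (hC : f.comp C = g.comp C) (hT : f (T 1) = g (T 1)) : f = g := by
  refine IsLocalization.ringHom_ext (Submonoid.powers (Polynomial.X : Polynomial R)) ?_
  refine Polynomial.ringHom_ext (fun a => ?_) ?_
  · simpa [← Polynomial.toLaurent_C] using RingHom.congr_fun hC a
  · simpa using hT

section AwayEquiv

variable {σ R : Type*} [CommRing R] [SetLike σ R] [AddSubgroupClass σ R] (𝒜 : ℕ → σ)
  [GradedRing 𝒜] {t c : R}

local notation "α" => algebraMap R (Localization.Away t)
local notation "mk" => Ideal.Quotient.mk (Ideal.span {t - c})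

theorem Ideal.Quotient.mk_span_singleton_sub : mk t = mk c :=
  Ideal.Quotient.eq.mpr (Ideal.subset_span rfl)

theorem isUnit_algebraMap_mul_invSelf (hcu : IsUnit c) :
    IsUnit (α c * IsLocalization.Away.invSelf t) :=
  (hcu.map α).mul (.of_mul_eq_one_right _ (IsLocalization.Away.mul_invSelf t))

noncomputable def quotientSubToAway (ht : t ∈ 𝒜 1) (hc : c ∈ 𝒜 0) :
    R ⧸ Ideal.span {t - c} →+* Localization.Away t :=
  Ideal.Quotient.lift _ (gradedTwist 𝒜 α (α c * IsLocalization.Away.invSelf t)) <| by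
    intro a ha
    obtain ⟨r, rfl⟩ := Ideal.mem_span_singleton'.mp ha
    rw [map_mul, map_sub, gradedTwist_of_mem 𝒜 _ _ ht, gradedTwist_of_mem 𝒜 _ _ hc, pow_one,
      pow_zero, mul_one, mul_left_comm, IsLocalization.Away.mul_invSelf, mul_one, sub_self,
      mul_zero]

theorem quotientSubToAway_mk (ht : t ∈ 𝒜 1) (hc : c ∈ 𝒜 0) {a : R} {n : ℕ} (ha : a ∈ 𝒜 n) :
    quotientSubToAway 𝒜 ht hc (mk a) = α a * (α c * IsLocalization.Away.invSelf t) ^ n :=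
  gradedTwist_of_mem 𝒜 _ _ ha

noncomputable def awayToLaurent (ht : t ∈ 𝒜 1) (hcu : IsUnit c) :
    Localization.Away t →+* (R ⧸ Ideal.span {t - c})[T;T⁻¹] :=
  IsLocalization.Away.lift t (g := gradedTwist 𝒜 (C.comp mk) (T 1)) <| by
    rw [gradedTwist_of_mem 𝒜 _ _ ht, RingHom.comp_apply, Ideal.Quotient.mk_span_singleton_sub,
      pow_one]
    exact ((hcu.map mk).map C).mul (isUnit_T 1)

theorem awayToLaurent_algebraMap (ht : t ∈ 𝒜 1) (hcu : IsUnit c) {a : R} {n : ℕ}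
    (ha : a ∈ 𝒜 n) : awayToLaurent 𝒜 ht hcu (α a) = C (mk a) * T n := by
  rw [awayToLaurent, IsLocalization.Away.lift_eq, gradedTwist_of_mem 𝒜 _ _ ha,
    RingHom.comp_apply, T_pow, mul_one]

theorem awayToLaurent_algebraMap_mul_invSelf (ht : t ∈ 𝒜 1) (hc : c ∈ 𝒜 0) (hcu : IsUnit c) :
    awayToLaurent 𝒜 ht hcu (α c * IsLocalization.Away.invSelf t) = T (-1) := by
  have h := congrArg (awayToLaurent 𝒜 ht hcu)
    (IsLocalization.Away.mul_invSelf (S := Localization.Away t) t)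
  rw [map_mul, map_one, awayToLaurent_algebraMap 𝒜 ht hcu ht,
    Ideal.Quotient.mk_span_singleton_sub, Nat.cast_one] at h
  calc _ = C (mk c) * T 1 * awayToLaurent 𝒜 ht hcu (IsLocalization.Away.invSelf t) * T (-1) := by
        rw [map_mul, awayToLaurent_algebraMap 𝒜 ht hcu hc, mul_right_comm _ (T 1),
          mul_assoc _ (T 1), ← T_add]
        simp
    _ = T (-1) := by rw [h, one_mul]

noncomputable def laurentToAway (ht : t ∈ 𝒜 1) (hc : c ∈ 𝒜 0) (hcu : IsUnit c) :
    (R ⧸ Ideal.span {t - c})[T;T⁻¹] →+* Localization.Away t :=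
  eval₂ (quotientSubToAway 𝒜 ht hc) (isUnit_algebraMap_mul_invSelf hcu).unit⁻¹

theorem laurentToAway_comp_awayToLaurent (ht : t ∈ 𝒜 1) (hc : c ∈ 𝒜 0) (hcu : IsUnit c) :
    (laurentToAway 𝒜 ht hc hcu).comp (awayToLaurent 𝒜 ht hcu) = RingHom.id _ := by
  refine IsLocalization.ringHom_ext (Submonoid.powers t)
    (GradedRing.ringHom_ext 𝒜 fun n a ha => ?_)
  rw [RingHom.comp_apply, RingHom.comp_apply, awayToLaurent_algebraMap 𝒜 ht hcu ha,
    laurentToAway, eval₂_C_mul_T, quotientSubToAway_mk 𝒜 ht hc ha, zpow_natCast,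
    Units.val_pow_eq_pow_val, mul_assoc, ← mul_pow, IsUnit.mul_val_inv, one_pow, mul_one]
  rfl

theorem awayToLaurent_comp_laurentToAway (ht : t ∈ 𝒜 1) (hc : c ∈ 𝒜 0) (hcu : IsUnit c) :
    (awayToLaurent 𝒜 ht hcu).comp (laurentToAway 𝒜 ht hc hcu) = RingHom.id _ := by
  have hw := awayToLaurent_algebraMap_mul_invSelf 𝒜 ht hc hcu
  refine LaurentPolynomial.ringHom_ext'
    (Ideal.Quotient.ringHom_ext (GradedRing.ringHom_ext 𝒜 fun n a ha => ?_)) ?_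
  · simp only [RingHom.comp_apply, laurentToAway, eval₂_C, quotientSubToAway_mk 𝒜 ht hc ha,
      map_mul, map_pow, awayToLaurent_algebraMap 𝒜 ht hcu ha, hw, T_pow, mul_assoc, ← T_add,
      RingHom.id_apply]
    simp
  · rw [RingHom.comp_apply, laurentToAway, eval₂_T, zpow_one, RingHom.id_apply]
    set w := isUnit_algebraMap_mul_invSelf (t := t) hcu
    calc awayToLaurent 𝒜 ht hcu ↑w.unit⁻¹
        = awayToLaurent 𝒜 ht hcu (↑w.unit⁻¹ * (α c * IsLocalization.Away.invSelf t)) * T 1 := by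
          rw [map_mul, hw, mul_assoc, ← T_add]; simp
      _ = T 1 := by rw [IsUnit.val_inv_mul, map_one, one_mul]

noncomputable def localizationAwayEquivLaurentPolynomial (ht : t ∈ 𝒜 1) (hc : c ∈ 𝒜 0)
    (hcu : IsUnit c) : Localization.Away t ≃+* (R ⧸ Ideal.span {t - c})[T;T⁻¹] :=
  RingEquiv.ofRingHom (awayToLaurent 𝒜 ht hcu) (laurentToAway 𝒜 ht hc hcu)
    (awayToLaurent_comp_laurentToAway 𝒜 ht hc hcu)
    (laurentToAway_comp_awayToLaurent 𝒜 ht hc hcu)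

end AwayEquiv

/-- Let `𝒫` be a `G`-deforming, isomorphism-invariant property of
commutative rings, i.e.:
(1) whenever `A` is an `ℕ`-graded Noetherian ring with `A₀ = K` and `x ∈ A₁` is a
nonzerodivisor such that `A/xA` has `𝒫`, then `A_x` has `𝒫`; and
(2) whenever `A[X, X⁻¹]` has `𝒫`, so does `A`.
If `R` is an `ℕ`-graded Noetherian ring with `R₀ = K` a field, `t ∈ R₁` a nonzerodivisor
on `R`, and `R/tR` has `𝒫`, then `R/(t - λ)R` has `𝒫` for every `λ ∈ K`. -/
theorem stmt14 (K : Type) [Field K]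
    (P : (A : Type) → [CommRing A] → Prop)
    (hiso : ∀ (A B : Type) [CommRing A] [CommRing B], (A ≃+* B) → P A → P B)
    (hP1 : ∀ (A : Type) [CommRing A] [IsNoetherianRing A] [Algebra K A]
      (ℬ : ℕ → Submodule K A) [GradedAlgebra ℬ], ℬ 0 = 1 →
      ∀ x : A, x ∈ ℬ 1 → x ∈ nonZeroDivisors A →
        P (A ⧸ Ideal.span {x}) → P (Localization.Away x))
    (hP2 : ∀ (A : Type) [CommRing A], P (LaurentPolynomial A) → P A)
    (R : Type) [CommRing R] [IsNoetherianRing R] [Algebra K R]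
    (𝒜 : ℕ → Submodule K R) [GradedAlgebra 𝒜] (h0 : 𝒜 0 = 1)
    (t : R) (ht : t ∈ 𝒜 1) (hreg : t ∈ nonZeroDivisors R)
    (hPt : P (R ⧸ Ideal.span {t})) :
    ∀ lam : K, P (R ⧸ Ideal.span {t - algebraMap K R lam}) := by
  intro lam
  rcases eq_or_ne lam 0 with rfl | hlam
  · rwa [map_zero, sub_zero]
  have e := localizationAwayEquivLaurentPolynomial 𝒜 ht (SetLike.algebraMap_mem_graded 𝒜 lam)
    ((isUnit_iff_ne_zero.mpr hlam).map (algebraMap K R))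
  exact hP2 _ (hiso _ _ e (hP1 R 𝒜 h0 t ht hreg hPt))
end

section
/- Let $K$ be a field of characteristic $p > 0$, $S = K[X_1,\ldots,X_n]$, $I \subseteq S$ an ideal, and $<$ a monomial order on $S$. If the initial ideal $\mathrm{in}_<(I^{[p]}:I)$ contains the monomial $X_1^{p-1}\cdots X_n^{p-1}$, then $\mathrm{in}_<(I)$ is a squarefree monomial ideal. -/
open MvPolynomial

/-- The leading exponent (multidegree) of a polynomial with respect to a monomial order. -/
noncomputable def lexp {n : ℕ} {K : Type} [Field K] (m : MonomialOrder (Fin n))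
    (f : MvPolynomial (Fin n) K) : Fin n →₀ ℕ :=
  m.toSyn.symm (f.support.sup fun u => m.toSyn u)

/-- The initial ideal `in_<(I)` of an ideal `I`, generated by the leading monomials of
the nonzero elements of `I`. -/
noncomputable def initialIdeal {n : ℕ} {K : Type} [Field K] (m : MonomialOrder (Fin n))
    (I : Ideal (MvPolynomial (Fin n) K)) : Ideal (MvPolynomial (Fin n) K) :=
  Ideal.span {g | ∃ f ∈ I, f ≠ 0 ∧ g = monomial (lexp m f) (1 : K)}

/-- The Frobenius power `I^{[p]}`: the ideal generated by `p`-th powers of elements of `I`. -/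
def frobPow {R : Type} [CommRing R] (I : Ideal R) (p : ℕ) : Ideal R :=
  Ideal.span ((fun x => x ^ p) '' (I : Set R))

/-!
Fix `c ∈ (I^[p] : I)`, `c ≠ 0`, whose leading exponent is `< p` in every coordinate. If `(v_l)` is a
basis of `K` over `K^p`, then `S` is free over `S^p` with basis `v_l X^a`, `0 ≤ a_i < p`, so
`I^[p]` consists of the sums `∑ v_l X^a g_{a,l}^p` with `g_{a,l} ∈ I`. The leading terms of
distinct summands cannot cancel (distinct `a`, or `K^p`-independence of the `v_l`): every nonzero
`h ∈ I^[p]` has leading exponent `a + p • in(g)` with `a_i < p` and `0 ≠ g ∈ I`. For `0 ≠ f ∈ I`,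
applying this to `h = c f` gives `in(c) + in(f) = a + p • in(g)`, hence `in(g) ≤ in(f)`, strictly
in every coordinate where `in(f)` is at least `2`. Descending, every leading exponent of `I` lies
above a squarefree one.
-/

section PowExpChar

variable {σ R : Type*} [CommSemiring R] (p : ℕ) [ExpChar R p]

theorem MvPolynomial.coeff_nsmul_pow_expChar (s : MvPolynomial σ R) (w : σ →₀ ℕ) :
    coeff (p • w) (s ^ p) = coeff w s ^ p := by
  rw [← map_frobenius_expand p, coeff_map, coeff_expand_smul p (expChar_pos R p).ne',
    frobenius_def]

theorem MvPolynomial.exists_eq_nsmul_of_coeff_pow_expChar_ne_zero {s : MvPolynomial σ R}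
    {u : σ →₀ ℕ} (hu : coeff u (s ^ p) ≠ 0) : ∃ w ∈ s.support, u = p • w := by
  classical
  rw [← map_frobenius_expand p, ← mem_support_iff] at hu
  obtain ⟨w, hw, rfl⟩ := Finset.mem_image.mp (support_expand_subset s (support_map_subset _ _ hu))
  exact ⟨w, hw, rfl⟩

end PowExpChar

theorem Finsupp.eq_of_add_nsmul_eq_add_nsmul {σ : Type*} {p : ℕ} {a a' w w' : σ →₀ ℕ}
    (ha : ∀ i, a i < p) (ha' : ∀ i, a' i < p) (h : a + p • w = a' + p • w') : a = a' := by
  ext i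
  have hi := congr(($h i) % p)
  simp only [Finsupp.coe_add, Finsupp.coe_smul, Pi.add_apply, Pi.smul_apply, smul_eq_mul,
    Nat.add_mul_mod_self_left, Nat.mod_eq_of_lt (ha i), Nat.mod_eq_of_lt (ha' i)] at hi
  exact hi

section FrobeniusCombination

variable {σ ι K : Type*} [Field K] (p : ℕ) [ExpChar K p]

theorem LinearIndependent.eq_zero_of_sum_mul_pow_expChar_eq_zero {κ : Type*} {v : ι → K}
    (hv : LinearIndependent (frobenius K p).fieldRange v) {s : Finset κ} {π : κ → ι}
    (hπ : Set.InjOn π s) {g : κ → K} (h : ∑ b ∈ s, v (π b) * g b ^ p = 0) :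
    ∀ b ∈ s, g b = 0 := by
  have hvs : LinearIndependent (frobenius K p).fieldRange fun b : s => v (π b) :=
    hv.comp _ hπ.injective
  intro b hb
  have := Fintype.linearIndependent_iff.mp hvs (fun b => ⟨g b ^ p, g b, rfl⟩)
    (by rw [← h, ← Finset.sum_coe_sort s]; exact Finset.sum_congr rfl fun b _ => mul_comm _ _)
    ⟨b, hb⟩
  exact pow_eq_zero_iff (expChar_pos K p).ne' |>.mp congr(($this : K))

noncomputable def frobeniusCombination (v : ι → K) :
    ((σ →₀ ℕ) × ι →₀ MvPolynomial σ K) →+ MvPolynomial σ K :=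
  Finsupp.liftAddHom fun b =>
    (AddMonoidHom.mulLeft (monomial b.1 (v b.2))).comp
      (frobenius (MvPolynomial σ K) p).toAddMonoidHom

variable {p}
variable (v : ι → K)

theorem frobeniusCombination_apply (t : (σ →₀ ℕ) × ι →₀ MvPolynomial σ K) :
    frobeniusCombination p v t = t.sum fun b s => monomial b.1 (v b.2) * s ^ p :=
  Finsupp.liftAddHom_apply _ _

theorem frobeniusCombination_single (b : (σ →₀ ℕ) × ι) (s : MvPolynomial σ K) :
    frobeniusCombination p v (Finsupp.single b s) = monomial b.1 (v b.2) * s ^ p :=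
  Finsupp.liftAddHom_apply_single _ _ _

theorem frobeniusCombination_smul (f : MvPolynomial σ K) (t : (σ →₀ ℕ) × ι →₀ MvPolynomial σ K) :
    frobeniusCombination p v (f • t) = f ^ p * frobeniusCombination p v t := by
  induction t using Finsupp.induction_linear with
  | zero => simp
  | add t₁ t₂ h₁ h₂ => rw [smul_add, map_add, map_add, h₁, h₂, mul_add]
  | single b s =>
    rw [Finsupp.smul_single, frobeniusCombination_single, frobeniusCombination_single, smul_eq_mul,
      mul_pow, mul_left_comm]

theorem exists_frobeniusCombination_eq (β : Module.Basis ι (frobenius K p).fieldRange K)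
    (x : MvPolynomial σ K) :
    ∃ t, (∀ b ∈ t.support, ∀ i, b.1 i < p) ∧ frobeniusCombination p β t = x := by
  classical
  have hp := expChar_pos K p
  induction x using MvPolynomial.induction_on' with
  | monomial u a =>
    set r := u.mapRange (· % p) (Nat.zero_mod p)
    set q := u.mapRange (· / p) (Nat.zero_div p)
    have hu : r + p • q = u := by ext i; simp [r, q, Nat.mod_add_div]
    choose root hroot using fun l => ((β.repr a l).2 : ∃ y, frobenius K p y = β.repr a l)
    refine ⟨∑ l ∈ (β.repr a).support, Finsupp.single (r, l) (monomial q (root l)), ?_, ?_⟩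
    · intro b hb i
      obtain ⟨l, -, hl⟩ := Finset.mem_biUnion.mp (Finsupp.support_finsetSum hb)
      rw [Finset.mem_singleton.mp (Finsupp.support_single_subset hl)]
      exact Nat.mod_lt _ hp
    · rw [map_sum]
      simp only [frobeniusCombination_single, monomial_pow, monomial_mul, hu, ← map_sum]
      congr 1
      conv_rhs => rw [← β.linearCombination_repr a]
      rw [Finsupp.linearCombination_apply, Finsupp.sum]
      refine Finset.sum_congr rfl fun l _ => ?_
      rw [Subfield.smul_def, ← hroot, frobenius_def, smul_eq_mul, mul_comm]
  | add x y hx hy =>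
    obtain ⟨t, ht, rfl⟩ := hx
    obtain ⟨t', ht', rfl⟩ := hy
    refine ⟨t + t', fun b hb => ?_, map_add _ _ _⟩
    rcases Finset.mem_union.mp (Finsupp.support_add hb) with hb | hb
    exacts [ht b hb, ht' b hb]

theorem coeff_frobeniusCombination_add_nsmul [DecidableEq σ]
    {t : (σ →₀ ℕ) × ι →₀ MvPolynomial σ K}
    (ht : ∀ b ∈ t.support, ∀ i, b.1 i < p) {a : σ →₀ ℕ} (ha : ∀ i, a i < p) (w : σ →₀ ℕ) :
    coeff (a + p • w) (frobeniusCombination p v t) =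
      ∑ b ∈ t.support with b.1 = a, v b.2 * coeff w (t b) ^ p := by
  rw [frobeniusCombination_apply, Finsupp.sum, coeff_sum, Finset.sum_filter]
  refine Finset.sum_congr rfl fun b hb => ?_
  rw [coeff_monomial_mul']
  by_cases hba : b.1 = a
  · rw [if_pos hba, if_pos (by rw [hba]; exact le_self_add), hba, add_tsub_cancel_left,
      coeff_nsmul_pow_expChar]
  · rw [if_neg hba, ite_eq_right_iff]
    intro hle
    by_contra hne
    obtain ⟨w', -, hw'⟩ :=
      exists_eq_nsmul_of_coeff_pow_expChar_ne_zero p (right_ne_zero_of_mul hne)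
    rw [tsub_eq_iff_eq_add_of_le hle, add_comm (p • w')] at hw'
    exact hba (Finsupp.eq_of_add_nsmul_eq_add_nsmul (ht b hb) ha hw'.symm)

theorem exists_eq_add_nsmul_of_mem_support_frobeniusCombination
    {t : (σ →₀ ℕ) × ι →₀ MvPolynomial σ K} {u : σ →₀ ℕ}
    (hu : u ∈ (frobeniusCombination p v t).support) :
    ∃ b ∈ t.support, ∃ w ∈ (t b).support, u = b.1 + p • w := by
  rw [frobeniusCombination_apply, Finsupp.sum, mem_support_iff, coeff_sum] at hu
  obtain ⟨b, hb, hne⟩ := Finset.exists_ne_zero_of_sum_ne_zero hu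
  rw [coeff_monomial_mul'] at hne
  split_ifs at hne with hle
  · obtain ⟨w, hw, hw'⟩ :=
      exists_eq_nsmul_of_coeff_pow_expChar_ne_zero p (right_ne_zero_of_mul hne)
    exact ⟨b, hb, w, hw, by rw [← hw', add_tsub_cancel_of_le hle]⟩
  · exact absurd rfl hne

variable {v}

theorem exists_degree_frobeniusCombination_eq (m : MonomialOrder σ)
    (hv : LinearIndependent (frobenius K p).fieldRange v) {t : (σ →₀ ℕ) × ι →₀ MvPolynomial σ K}
    (ht : ∀ b ∈ t.support, ∀ i, b.1 i < p) (h0 : frobeniusCombination p v t ≠ 0) :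
    ∃ b ∈ t.support, m.degree (frobeniusCombination p v t) = b.1 + p • m.degree (t b) := by
  have hne : t.support.Nonempty :=
    Finsupp.support_nonempty_iff.mpr fun h => h0 (by rw [h, map_zero])
  obtain ⟨b₀, hb₀, hmax⟩ :=
    t.support.exists_max_image (fun b => m.toSyn (b.1 + p • m.degree (t b))) hne
  refine ⟨b₀, hb₀, m.toSyn.injective (le_antisymm ?_ ?_)⟩
  · refine m.degree_le_iff.mpr fun u hu => ?_
    obtain ⟨b, hb, w, hw, rfl⟩ := exists_eq_add_nsmul_of_mem_support_frobeniusCombination v hu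
    calc m.toSyn (b.1 + p • w) = m.toSyn b.1 + p • m.toSyn w := by rw [map_add, map_nsmul]
      _ ≤ m.toSyn b.1 + p • m.toSyn (m.degree (t b)) := by gcongr; exact m.le_degree hw
      _ = m.toSyn (b.1 + p • m.degree (t b)) := by rw [map_add, map_nsmul]
      _ ≤ _ := hmax b hb
  · classical
    refine m.le_degree (mem_support_iff.mpr fun hzero => ?_)
    rw [coeff_frobeniusCombination_add_nsmul v ht (ht b₀ hb₀)] at hzero
    have hinj : Set.InjOn (Prod.snd : (σ →₀ ℕ) × ι → ι)
        ↑(t.support.filter fun b => b.1 = b₀.1) := by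
      intro b hb b' hb' h
      exact Prod.ext ((Finset.mem_filter.mp hb).2.trans (Finset.mem_filter.mp hb').2.symm) h
    have := hv.eq_zero_of_sum_mul_pow_expChar_eq_zero p hinj hzero b₀
      (Finset.mem_filter.mpr ⟨hb₀, rfl⟩)
    exact m.coeff_degree_ne_zero_iff.mpr (Finsupp.mem_support_iff.mp hb₀) this

end FrobeniusCombination

section FrobeniusPower

variable {σ K : Type} [Field K] {p : ℕ} [ExpChar K p]

theorem exists_degree_eq_add_nsmul_of_mem_frobPow (m : MonomialOrder σ)
    {I : Ideal (MvPolynomial σ K)} {h : MvPolynomial σ K} (hh : h ∈ frobPow I p) (h0 : h ≠ 0) :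
    ∃ a g, (∀ i, a i < p) ∧ g ∈ I ∧ g ≠ 0 ∧ m.degree h = a + p • m.degree g := by
  classical
  let β := Module.Basis.ofVectorSpace (frobenius K p).fieldRange K
  obtain ⟨k, c, f, rfl⟩ := Submodule.mem_span_set'.mp hh
  choose g hgI hg using fun i => (f i).2
  choose t ht hct using fun i => exists_frobeniusCombination_eq β (c i)
  set T := ∑ i, g i • t i
  have hT : frobeniusCombination p β T = ∑ i, c i • (f i : MvPolynomial σ K) := by
    simp only [T, map_sum, frobeniusCombination_smul, hct, hg, smul_eq_mul, mul_comm]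
  have hTsupp : ∀ b ∈ T.support, ∀ i, b.1 i < p := by
    intro b hb
    obtain ⟨i, -, hi⟩ := Finset.mem_biUnion.mp (Finsupp.support_finsetSum hb)
    exact ht i b (Finsupp.support_smul hi)
  have hTI : ∀ b, T b ∈ I := fun b => by
    simp only [T, Finsupp.finsetSum_apply, Finsupp.smul_apply, smul_eq_mul]
    exact Ideal.sum_mem _ fun i _ => Ideal.mul_mem_right _ _ (hgI i)
  rw [← hT] at h0 ⊢
  obtain ⟨b, hb, hdeg⟩ := exists_degree_frobeniusCombination_eq m β.linearIndependent hTsupp h0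
  exact ⟨b.1, T b, hTsupp b hb, hTI b, Finsupp.mem_support_iff.mp hb, hdeg⟩

end FrobeniusPower

theorem Nat.le_of_add_eq_add_mul {p c f a g : ℕ} (hc : c < p)
    (h : c + f = a + p * g) : g ≤ f := by
  nlinarith

theorem Nat.lt_of_add_eq_add_mul {p c f a g : ℕ} (hp : 2 ≤ p) (hc : c < p) (hf : 2 ≤ f)
    (h : c + f = a + p * g) : g < f := by
  nlinarith

section Descent

variable {σ K : Type} [Field K] {p : ℕ} [Fact p.Prime] [CharP K p]

theorem exists_degree_le_of_mem_colon_frobPow (m : MonomialOrder σ)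
    {I : Ideal (MvPolynomial σ K)} {c : MvPolynomial σ K} (hc : c ∈ (frobPow I p).colon I)
    (hc0 : c ≠ 0) (hcp : ∀ i, m.degree c i < p) {f : MvPolynomial σ K} (hf : f ∈ I)
    (hf0 : f ≠ 0) :
    ∃ g ∈ I, g ≠ 0 ∧ m.degree g ≤ m.degree f ∧
      ∀ i, 2 ≤ m.degree f i → m.degree g i < m.degree f i := by
  have hp := (Fact.out : p.Prime).two_le
  obtain ⟨a, g, -, hg, hg0, hdeg⟩ := exists_degree_eq_add_nsmul_of_mem_frobPow m
    (Submodule.mem_colon.mp hc f hf) (mul_ne_zero hc0 hf0)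
  rw [smul_eq_mul, m.degree_mul hc0 hf0] at hdeg
  have hcoord : ∀ i, m.degree c i + m.degree f i = a i + p * m.degree g i := fun i => by
    simpa using congr($hdeg i)
  exact ⟨g, hg, hg0, fun i => Nat.le_of_add_eq_add_mul (hcp i) (hcoord i),
    fun i hi => Nat.lt_of_add_eq_add_mul hp (hcp i) hi (hcoord i)⟩

theorem exists_squarefree_degree_le_of_mem_colon_frobPow (m : MonomialOrder σ)
    {I : Ideal (MvPolynomial σ K)} {c : MvPolynomial σ K} (hc : c ∈ (frobPow I p).colon I)
    (hc0 : c ≠ 0) (hcp : ∀ i, m.degree c i < p) {f : MvPolynomial σ K} (hf : f ∈ I)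
    (hf0 : f ≠ 0) :
    ∃ g ∈ I, g ≠ 0 ∧ (∀ i, m.degree g i ≤ 1) ∧ m.degree g ≤ m.degree f := by
  suffices ∀ d, ∀ f ∈ I, f ≠ 0 → m.degree f = d →
      ∃ g ∈ I, g ≠ 0 ∧ (∀ i, m.degree g i ≤ 1) ∧ m.degree g ≤ d from this _ f hf hf0 rfl
  intro d
  induction d using WellFoundedLT.induction with
  | _ d ih =>
    rintro f hf hf0 rfl
    by_cases hsq : ∀ i, m.degree f i ≤ 1
    · exact ⟨f, hf, hf0, hsq, le_rfl⟩
    push Not at hsq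
    obtain ⟨i₀, hi₀⟩ := hsq
    obtain ⟨g, hg, hg0, hle, hlt⟩ := exists_degree_le_of_mem_colon_frobPow m hc hc0 hcp hf hf0
    have hgf : m.degree g < m.degree f :=
      lt_of_le_of_ne hle fun h => (hlt i₀ hi₀).ne congr($h i₀)
    obtain ⟨g', hg', hg'0, hsq, hle'⟩ := ih _ hgf g hg hg0 rfl
    exact ⟨g', hg', hg'0, hsq, hle'.trans hle⟩

end Descent

theorem MvPolynomial.span_monomial_image_eq_of_forall_exists_le {σ R : Type*} [CommSemiring R]
    {s t : Set (σ →₀ ℕ)} (hts : t ⊆ s) (h : ∀ d ∈ s, ∃ e ∈ t, e ≤ d) :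
    Ideal.span ((fun u => monomial u (1 : R)) '' s) =
      Ideal.span ((fun u => monomial u (1 : R)) '' t) := by
  refine le_antisymm (Ideal.span_le.mpr ?_) (Ideal.span_mono (Set.image_mono hts))
  rintro _ ⟨d, hd, rfl⟩
  refine mem_ideal_span_monomial_image.mpr fun d' hd' => ?_
  rw [Finset.mem_singleton.mp (support_monomial_subset hd')]
  exact h d hd

theorem initialIdeal_eq_span_monomial_degree {n : ℕ} {K : Type} [Field K]
    (m : MonomialOrder (Fin n)) (I : Ideal (MvPolynomial (Fin n) K)) :
    initialIdeal m I = Ideal.span ((fun u => monomial u (1 : K)) ''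
      {d | ∃ f ∈ I, f ≠ 0 ∧ m.degree f = d}) := by
  rw [initialIdeal, Set.image]
  congr 1
  ext g
  constructor
  · rintro ⟨f, hf, hf0, rfl⟩
    exact ⟨_, ⟨f, hf, hf0, rfl⟩, rfl⟩
  · rintro ⟨_, ⟨f, hf, hf0, rfl⟩, rfl⟩
    exact ⟨f, hf, hf0, rfl⟩

/-- Let `S = K[X_1,…,X_n]` over a field `K` of characteristic `p > 0`,
`I ⊆ S` an ideal and `<` a monomial order. If `in_<(I^{[p]} : I)` contains the monomial
`X_1^{p-1} ⋯ X_n^{p-1}`, then `in_<(I)` is a squarefree monomial ideal. -/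
theorem stmt17 (n p : ℕ) [Fact p.Prime] (K : Type) [Field K] [CharP K p]
    (m : MonomialOrder (Fin n)) (I : Ideal (MvPolynomial (Fin n) K))
    (h : monomial (Finsupp.equivFunOnFinite.symm fun _ => p - 1) (1 : K) ∈
      initialIdeal m (Submodule.colon (frobPow I p) I)) :
    IsSqFreeMonomialIdeal n K (initialIdeal m I) := by
  have hp := (Fact.out : p.Prime).pos
  rw [initialIdeal_eq_span_monomial_degree] at h ⊢
  obtain ⟨_, ⟨c, hc, hc0, rfl⟩, hcle⟩ := mem_ideal_span_monomial_image.mp h _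
    (mem_support_iff.mpr (by rw [coeff_monomial, if_pos rfl]; exact one_ne_zero))
  have hcp : ∀ i, m.degree c i < p := fun i => by
    have := hcle i
    simp only [Finsupp.equivFunOnFinite_symm_apply_apply] at this
    omega
  refine ⟨{d | (∀ i, d i ≤ 1) ∧ ∃ f ∈ I, f ≠ 0 ∧ m.degree f = d}, fun _ hd => hd.1,
    span_monomial_image_eq_of_forall_exists_le (fun _ hd => hd.2) ?_⟩
  rintro _ ⟨f, hf, hf0, rfl⟩
  obtain ⟨g, hg, hg0, hsq, hle⟩ :=
    exists_squarefree_degree_le_of_mem_colon_frobPow m hc hc0 hcp hf hf0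
  exact ⟨_, ⟨hsq, g, hg, hg0, rfl⟩, hle⟩
end
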